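/- For any real 0 < q < 1 and positive integers m ≤ n, the telescoping identity (q^m/[m]_q) · ∑_{a=m}^{n} q^{-a} C(a,n,q,x) = C(m,n,q,x)/[n]_q holds, where C(m,n,q,x) := (-1)^{m-1} q^{m(m+1)/2} · ∏_{h=1}^{n}([h]_q − q^h x)/([m]_q! [n−m]_q!). -/

import Mathlib

/-!
Every term shares the factor `∏ ([h]_q - q^h x)`, so the identity is one between the
coefficients `c_a = (-1)^(a-1) q^(a(a+1)/2) / ([a]_q! [n-a]_q!)`. Because
`[n]_q = [a]_q + q^a [n-a]_q`, the term `[n]_q q^(-a) c_a` is the difference `W(a+1) - W(a)`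
of `W(a) = (-1)^a q^(a(a-1)/2) / ([a-1]_q! [n-a]_q!)`. The sum therefore telescopes to `-W(m)`,
and `q^m W(m) = -[m]_q c_m`.
-/

noncomputable def qint (q : ℝ) (m : ℕ) : ℝ := (1 - q ^ m) / (1 - q)

noncomputable def qfact (q : ℝ) (m : ℕ) : ℝ := ∏ a ∈ Finset.Icc 1 m, qint q a

/-- The connector `C(m,n,q,x)`. -/
noncomputable def connector (q : ℝ) (m n : ℕ) (x : ℝ) : ℝ :=
  (-1 : ℝ) ^ (m - 1) * q ^ (m * (m + 1) / 2) *
    (∏ h ∈ Finset.Icc 1 n, (qint q h - q ^ h * x)) / (qfact q m * qfact q (n - m))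

lemma neg_one_pow_eq_neg_pow_pred {R : Type*} [Ring R] {n : ℕ} (hn : 0 < n) :
    (-1 : R) ^ n = -(-1) ^ (n - 1) := by
  simpa [Nat.sub_add_cancel hn] using pow_succ (-1 : R) (n - 1)

lemma triangle_eq_triangle_pred_add (a : ℕ) : a * (a + 1) / 2 = a * (a - 1) / 2 + a := by
  simpa [mul_comm] using Nat.triangle_succ a

lemma qint_zero (q : ℝ) : qint q 0 = 0 := by
  simp [qint]

lemma qint_add (q : ℝ) (m k : ℕ) : qint q (m + k) = qint q m + q ^ m * qint q k := by
  unfold qint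
  ring

lemma qint_pos {q : ℝ} (hq0 : 0 ≤ q) (hq1 : q ≠ 1) {k : ℕ} (hk : 0 < k) : 0 < qint q k := by
  have hgeom : qint q k = ∑ i ∈ Finset.range k, q ^ i := by
    rw [geom_sum_eq hq1, qint, ← neg_div_neg_eq, neg_sub, neg_sub]
  rw [hgeom]
  exact Finset.sum_pos' (fun i _ => pow_nonneg hq0 i) ⟨0, by simpa using hk, by simp⟩

lemma qfact_succ (q : ℝ) (k : ℕ) : qfact q (k + 1) = qfact q k * qint q (k + 1) :=
  Finset.prod_Icc_succ_top (by omega) _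

lemma qfact_eq_qfact_pred_mul {k : ℕ} (q : ℝ) (hk : 0 < k) :
    qfact q k = qfact q (k - 1) * qint q k := by
  simpa [Nat.sub_add_cancel hk] using qfact_succ q (k - 1)

lemma qfact_pos {q : ℝ} (hq0 : 0 ≤ q) (hq1 : q ≠ 1) (k : ℕ) : 0 < qfact q k :=
  Finset.prod_pos fun _ hi => qint_pos hq0 hq1 (Finset.mem_Icc.mp hi).1

noncomputable def connectorCoeff (q : ℝ) (m n : ℕ) : ℝ :=
  (-1 : ℝ) ^ (m - 1) * q ^ (m * (m + 1) / 2) / (qfact q m * qfact q (n - m))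

lemma connector_eq_connectorCoeff_mul (q : ℝ) (m n : ℕ) (x : ℝ) :
    connector q m n x = connectorCoeff q m n * ∏ h ∈ Finset.Icc 1 n, (qint q h - q ^ h * x) := by
  rw [connector, connectorCoeff, mul_div_right_comm]

/- For `a ≤ n` the factor `qint q (n + 1 - a) / qfact q (n + 1 - a)` is `1 / qfact q (n - a)`;
at `a = n + 1` it vanishes, which closes the telescope. -/
noncomputable def connectorPotential (q : ℝ) (n a : ℕ) : ℝ :=
  (-1 : ℝ) ^ a * q ^ (a * (a - 1) / 2) * qint q (n + 1 - a) /
    (qfact q (a - 1) * qfact q (n + 1 - a))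

lemma qint_mul_inv_pow_mul_connectorCoeff {q : ℝ} (hq0 : 0 < q) (hq1 : q ≠ 1) {a n : ℕ}
    (ha : 0 < a) (han : a ≤ n) :
    qint q n * ((q ^ a)⁻¹ * connectorCoeff q a n) =
      connectorPotential q n (a + 1) - connectorPotential q n a := by
  have hsplit : qint q n = qint q a + q ^ a * qint q (n - a) := by
    rw [← qint_add, Nat.add_sub_cancel' han]
  rw [connectorCoeff, connectorPotential, connectorPotential, Nat.add_sub_cancel,
    Nat.add_sub_add_right, mul_comm (a + 1) a, triangle_eq_triangle_pred_add,
    show n + 1 - a = n - a + 1 by omega, qfact_succ, qfact_eq_qfact_pred_mul q ha, pow_succ,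
    neg_one_pow_eq_neg_pow_pred ha, hsplit, pow_add]
  have := hq0.ne'
  have := (qint_pos hq0.le hq1 ha).ne'
  have := (qint_pos hq0.le hq1 (Nat.succ_pos (n - a))).ne'
  have := (qfact_pos hq0.le hq1 (a - 1)).ne'
  have := (qfact_pos hq0.le hq1 (n - a)).ne'
  field_simp
  ring

lemma qint_mul_sum_inv_pow_mul_connectorCoeff {q : ℝ} (hq0 : 0 < q) (hq1 : q ≠ 1) {m n : ℕ}
    (hm : 0 < m) (hmn : m ≤ n) :
    qint q n * ∑ a ∈ Finset.Icc m n, (q ^ a)⁻¹ * connectorCoeff q a n =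
      -connectorPotential q n m := by
  have hstep : ∀ a ∈ Finset.Ico m (n + 1), qint q n * ((q ^ a)⁻¹ * connectorCoeff q a n) =
      connectorPotential q n (a + 1) - connectorPotential q n a := fun a ha =>
    qint_mul_inv_pow_mul_connectorCoeff hq0 hq1 (hm.trans_le (Finset.mem_Ico.mp ha).1)
      (Nat.lt_succ_iff.mp (Finset.mem_Ico.mp ha).2)
  have htop : connectorPotential q n (n + 1) = 0 := by
    rw [connectorPotential, Nat.sub_self, qint_zero, mul_zero, zero_div]
  rw [Finset.mul_sum, ← Finset.Ico_add_one_right_eq_Icc, Finset.sum_congr rfl hstep,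
    Finset.sum_Ico_sub _ (by omega), htop, zero_sub]

lemma pow_mul_connectorPotential {q : ℝ} (hq0 : 0 ≤ q) (hq1 : q ≠ 1) {m n : ℕ}
    (hm : 0 < m) (hmn : m ≤ n) :
    q ^ m * connectorPotential q n m = -(qint q m * connectorCoeff q m n) := by
  rw [connectorPotential, connectorCoeff, show n + 1 - m = n - m + 1 by omega, qfact_succ,
    qfact_eq_qfact_pred_mul q hm, neg_one_pow_eq_neg_pow_pred hm, triangle_eq_triangle_pred_add,
    pow_add]
  have := (qint_pos hq0 hq1 hm).ne'
  have := (qint_pos hq0 hq1 (Nat.succ_pos (n - m))).ne'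
  have := (qfact_pos hq0 hq1 (m - 1)).ne'
  have := (qfact_pos hq0 hq1 (n - m)).ne'
  field_simp

theorem connector_telescoping_left (q : ℝ) (hq0 : 0 < q) (hq1 : q < 1) (m n : ℕ)
    (hm : 0 < m) (hmn : m ≤ n) (x : ℝ) :
    q ^ m / qint q m * ∑ a ∈ Finset.Icc m n, (q ^ a)⁻¹ * connector q a n x =
      connector q m n x / qint q n := by
  simp_rw [connector_eq_connectorCoeff_mul, ← mul_assoc, ← Finset.sum_mul]
  set P := ∏ h ∈ Finset.Icc 1 n, (qint q h - q ^ h * x)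
  set S := ∑ a ∈ Finset.Icc m n, (q ^ a)⁻¹ * connectorCoeff q a n
  have hsum : qint q n * S = -connectorPotential q n m :=
    qint_mul_sum_inv_pow_mul_connectorCoeff hq0 hq1.ne hm hmn
  have hpot := pow_mul_connectorPotential hq0.le hq1.ne hm hmn
  have := (qint_pos hq0.le hq1.ne hm).ne'
  have := (qint_pos hq0.le hq1.ne (hm.trans_le hmn)).ne'
  field_simp
  linear_combination (q ^ m * P) * hsum - P * hpot
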